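/- arXiv:1509.08400 — 4 statements merged into one kernel-verified Lean document; each statement's English description precedes it below -/
import Mathlib

section
/- The shuffle relation for multiple zeta values: ζ(2)·ζ(2) = 2ζ(2,2) + 4ζ(1,3), where ζ(n₁,n₂) = Σ_{0<k₁<k₂} 1/(k₁^{n₁} k₂^{n₂}). -/
/-- The Riemann zeta value ζ(n) = Σ_{k ≥ 1} 1/kⁿ. -/
noncomputable def riemannZetaValue (n : ℕ) : ℝ := ∑' k : ℕ+, 1 / (k : ℝ) ^ n

/-- The double zeta value ζ(n₁, n₂) = Σ_{0 < k₁ < k₂} 1/(k₁^{n₁} k₂^{n₂}). -/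
noncomputable def doubleZetaValue (n₁ n₂ : ℕ) : ℝ :=
  ∑' p : {p : ℕ+ × ℕ+ // p.1 < p.2}, 1 / ((p.val.1 : ℝ) ^ n₁ * (p.val.2 : ℝ) ^ n₂)

/-!
Partial fractions give, for `m, n > 0`,
`1/(m²n²) = 1/(m²(m+n)²) + 1/(n²(m+n)²) + 2/(m(m+n)³) + 2/(n(m+n)³)`.
Summing over all pairs `(m, n)` of positive integers, the left side is `ζ(2)²`; after the
substitution `k₁ = m`, `k₂ = m + n` (resp. `k₁ = n`, `k₂ = m + n`) the four sums on the right are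
`ζ(2,2)`, `ζ(2,2)`, `2ζ(1,3)` and `2ζ(1,3)`.
-/

def PNat.prodEquivLt : (ℕ+ × ℕ+) ≃ {p : ℕ+ × ℕ+ // p.1 < p.2} where
  toFun q := ⟨(q.1, q.1 + q.2), PNat.lt_add_right q.1 q.2⟩
  invFun p := (p.val.1, p.val.2 - p.val.1)
  left_inv q := by
    ext
    · rfl
    · show q.1 + q.2 - q.1 = q.2
      rw [add_comm]; exact PNat.add_sub
  right_inv p := by
    apply Subtype.ext
    ext
    · rfl
    · show p.val.1 + (p.val.2 - p.val.1) = p.val.2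
      rw [add_comm]; exact PNat.sub_add_of_lt p.prop

noncomputable def doubleZetaSummand (a b : ℕ) (q : ℕ+ × ℕ+) : ℝ :=
  1 / ((q.1 : ℝ) ^ a * ((q.1 : ℝ) + q.2) ^ b)

theorem doubleZetaValue_eq_tsum_doubleZetaSummand (a b : ℕ) :
    doubleZetaValue a b = ∑' q, doubleZetaSummand a b q := by
  rw [doubleZetaValue, ← PNat.prodEquivLt.tsum_eq]
  refine tsum_congr fun q => ?_
  simp [PNat.prodEquivLt, doubleZetaSummand]

theorem tsum_doubleZetaSummand_swap (a b : ℕ) :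
    ∑' q : ℕ+ × ℕ+, doubleZetaSummand a b q.swap = ∑' q, doubleZetaSummand a b q :=
  (Equiv.prodComm ℕ+ ℕ+).tsum_eq (doubleZetaSummand a b)

theorem sq_mul_sq_le_pow_mul_add_pow {a b m n : ℕ} (hn : 0 < n) (ha : a ≤ 2) (hab : 4 ≤ a + b) :
    m ^ 2 * n ^ 2 ≤ m ^ a * (m + n) ^ b := by
  have hmn : 1 ≤ m + n := by omega
  calc m ^ 2 * n ^ 2 = m ^ a * (m ^ (2 - a) * n ^ 2) := by
        rw [← mul_assoc, ← pow_add, Nat.add_sub_cancel' ha]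
    _ ≤ m ^ a * ((m + n) ^ (2 - a) * (m + n) ^ 2) := by
        gcongr <;> omega
    _ = m ^ a * (m + n) ^ (4 - a) := by rw [← pow_add]; congr 2; omega
    _ ≤ m ^ a * (m + n) ^ b := by gcongr; omega

theorem summable_one_div_pnat_pow {p : ℕ} (hp : 1 < p) :
    Summable fun k : ℕ+ => 1 / (k : ℝ) ^ p :=
  (Real.summable_one_div_nat_pow.mpr hp).comp_injective PNat.coe_injective

theorem summable_one_div_pow_mul_one_div_pow {p r : ℕ} (hp : 1 < p) (hr : 1 < r) :
    Summable fun q : ℕ+ × ℕ+ => 1 / (q.1 : ℝ) ^ p * (1 / (q.2 : ℝ) ^ r) :=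
  (summable_one_div_pnat_pow hp).mul_of_nonneg (summable_one_div_pnat_pow hr)
    (fun _ => by positivity) (fun _ => by positivity)

theorem summable_doubleZetaSummand {a b : ℕ} (ha : a ≤ 2) (hab : 4 ≤ a + b) :
    Summable (doubleZetaSummand a b) := by
  refine (summable_one_div_pow_mul_one_div_pow one_lt_two one_lt_two).of_nonneg_of_le
    (fun _ => by unfold doubleZetaSummand; positivity) fun q => ?_
  rw [doubleZetaSummand, div_mul_div_comm, one_mul]
  refine one_div_le_one_div_of_le (by positivity) ?_
  exact_mod_cast sq_mul_sq_le_pow_mul_add_pow q.2.pos ha hab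

theorem riemannZetaValue_mul_riemannZetaValue {p r : ℕ} (hp : 1 < p) (hr : 1 < r) :
    riemannZetaValue p * riemannZetaValue r =
      ∑' q : ℕ+ × ℕ+, 1 / (q.1 : ℝ) ^ p * (1 / (q.2 : ℝ) ^ r) :=
  tsum_mul_tsum_of_summable_norm
    (by simpa using summable_one_div_pnat_pow hp)
    (by simpa using summable_one_div_pnat_pow hr)

theorem one_div_sq_mul_one_div_sq_eq {x y : ℝ} (hx : 0 < x) (hy : 0 < y) :
    1 / x ^ 2 * (1 / y ^ 2) =
      1 / (x ^ 2 * (x + y) ^ 2) + 1 / (y ^ 2 * (y + x) ^ 2) +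
        2 * (1 / (x ^ 1 * (x + y) ^ 3)) + 2 * (1 / (y ^ 1 * (y + x) ^ 3)) := by
  have hxy : 0 < x + y := by positivity
  rw [add_comm y x]
  field_simp
  ring

/-- Shuffle relation: ζ(2)·ζ(2) = 2ζ(2,2) + 4ζ(1,3). -/
theorem zeta2_mul_zeta2 :
    riemannZetaValue 2 * riemannZetaValue 2 =
      2 * doubleZetaValue 2 2 + 4 * doubleZetaValue 1 3 := by
  have h22 : Summable (doubleZetaSummand 2 2) := summable_doubleZetaSummand le_rfl le_rfl
  have h13 : Summable (doubleZetaSummand 1 3) := summable_doubleZetaSummand one_le_two le_rfl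
  have swap_summable {a b : ℕ} (h : Summable (doubleZetaSummand a b)) :
      Summable fun q : ℕ+ × ℕ+ => doubleZetaSummand a b q.swap :=
    (Equiv.prodComm ℕ+ ℕ+).summable_iff.mpr h
  calc riemannZetaValue 2 * riemannZetaValue 2
      = ∑' q : ℕ+ × ℕ+, (doubleZetaSummand 2 2 q + doubleZetaSummand 2 2 q.swap +
          2 * doubleZetaSummand 1 3 q + 2 * doubleZetaSummand 1 3 q.swap) := by
        rw [riemannZetaValue_mul_riemannZetaValue one_lt_two one_lt_two]
        exact tsum_congr fun q => one_div_sq_mul_one_div_sq_eq (by simp) (by simp)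
    _ = 2 * doubleZetaValue 2 2 + 4 * doubleZetaValue 1 3 := by
        rw [Summable.tsum_add ((h22.add (swap_summable h22)).add (h13.mul_left 2))
            ((swap_summable h13).mul_left 2),
          Summable.tsum_add (h22.add (swap_summable h22)) (h13.mul_left 2),
          Summable.tsum_add h22 (swap_summable h22), tsum_mul_left, tsum_mul_left,
          tsum_doubleZetaSummand_swap, tsum_doubleZetaSummand_swap,
          ← doubleZetaValue_eq_tsum_doubleZetaSummand,
          ← doubleZetaValue_eq_tsum_doubleZetaSummand]
        ring
end

section
/- For any nonzero complex numbers a, b with a + b ≠ 0 and positive integers m, n, one has 1/(aᵐ bⁿ) = Σ_{i=1}^{m} C(m+n-i-1, n-1) / (aⁱ (a+b)^{m+n-i}) + Σ_{j=1}^{n} C(m+n-j-1, m-1) / (bʲ (a+b)^{m+n-j}). -/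
/-!
Put `x = a / (a + b)` and `y = b / (a + b)`, so that `x + y = 1`. Multiplied by `aᵐ bⁿ`, the
identity says that `∑_{k<m} C(n-1+k, n-1) xᵏ yⁿ + ∑_{l<n} C(m-1+l, m-1) xᵐ yˡ = 1`: in Bernoulli
trials with probabilities `x` and `y`, either `n` successes come before `m` failures or the other
way round. Pascal's rule for the truncated binomial series makes the left side `F m n` satisfy
`F (m+1) (n+1) = x F m (n+1) + y F (m+1) n`, and on the boundary it is a geometric sum.
-/

open Finset

section Truncation

variable {R : Type*}

/-- The degree-`m` truncation of the power series of `(1 - x)⁻¹ ^ (n + 1)`. -/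
def invOneSubPowTrunc [CommSemiring R] (x : R) (n m : ℕ) : R :=
  ∑ k ∈ range (m + 1), ((n + k).choose n : R) * x ^ k

section CommSemiring

variable [CommSemiring R]

theorem invOneSubPowTrunc_zero_right (x : R) (n : ℕ) : invOneSubPowTrunc x n 0 = 1 := by
  simp [invOneSubPowTrunc]

theorem invOneSubPowTrunc_zero_left (x : R) (m : ℕ) :
    invOneSubPowTrunc x 0 m = ∑ k ∈ range (m + 1), x ^ k := by
  simp [invOneSubPowTrunc]

theorem invOneSubPowTrunc_succ_succ (x : R) (n m : ℕ) :
    invOneSubPowTrunc x (n + 1) (m + 1) =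
      x * invOneSubPowTrunc x (n + 1) m + invOneSubPowTrunc x n (m + 1) := by
  simp only [invOneSubPowTrunc, mul_sum]
  rw [sum_range_succ' _ (m + 1), sum_range_succ' _ (m + 1), add_left_comm, ← add_assoc,
    ← sum_add_distrib]
  congr 1
  · refine sum_congr rfl fun k _ => ?_
    rw [show n + 1 + (k + 1) = n + k + 1 + 1 by omega, Nat.choose_succ_succ', Nat.cast_add,
      show n + (k + 1) = n + k + 1 by omega, show n + 1 + k = n + k + 1 by omega]
    ring
  · simp

end CommSemiring

section CommRing

variable [CommRing R] {x y : R}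

theorem invOneSubPowTrunc_mul_pow_add_mul_pow_eq_one_zero (hxy : x + y = 1) (n : ℕ) :
    invOneSubPowTrunc x n 0 * y ^ (n + 1) + invOneSubPowTrunc y 0 n * x ^ 1 = 1 := by
  rw [invOneSubPowTrunc_zero_right, invOneSubPowTrunc_zero_left, pow_one,
    eq_sub_of_add_eq hxy, geom_sum_mul_neg]
  ring

theorem invOneSubPowTrunc_mul_pow_add_mul_pow_eq_one (hxy : x + y = 1) (m n : ℕ) :
    invOneSubPowTrunc x n m * y ^ (n + 1) + invOneSubPowTrunc y m n * x ^ (m + 1) = 1 := by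
  induction m generalizing n with
  | zero => exact invOneSubPowTrunc_mul_pow_add_mul_pow_eq_one_zero hxy n
  | succ m ihm =>
    induction n with
    | zero =>
      rw [add_comm]
      exact invOneSubPowTrunc_mul_pow_add_mul_pow_eq_one_zero (by rwa [add_comm]) (m + 1)
    | succ n ihn =>
      rw [invOneSubPowTrunc_succ_succ, invOneSubPowTrunc_succ_succ]
      linear_combination x * ihm (n + 1) + y * ihn + hxy

end CommRing

end Truncation

theorem sum_Icc_choose_div_pow_eq_invOneSubPowTrunc_div {K : Type*} [Field K] {a s : K}
    (ha : a ≠ 0) (hs : s ≠ 0) (m n : ℕ) :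
    ∑ i ∈ Icc 1 (m + 1), ((m + n + 1 - i).choose n : K) / (a ^ i * s ^ (m + n + 2 - i)) =
      invOneSubPowTrunc (a / s) n m / (a ^ (m + 1) * s ^ (n + 1)) := by
  rw [invOneSubPowTrunc, sum_div]
  refine sum_nbij' (fun i => m + 1 - i) (fun k => m + 1 - k) ?_ ?_ ?_ ?_ fun i hi => ?_
  pick_goal 5
  · have hi : i ≤ m + 1 := (mem_Icc.mp hi).2
    rw [show m + n + 1 - i = n + (m + 1 - i) by omega,
      show m + n + 2 - i = n + 1 + (m + 1 - i) by omega,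
      show a ^ (m + 1) = a ^ i * a ^ (m + 1 - i) by rw [← pow_add, Nat.add_sub_cancel' hi],
      div_pow]
    field_simp
    ring
  all_goals (intro i hi; simp only [mem_Icc, mem_range] at hi ⊢; omega)

/-- General partial-fraction (shuffle) identity:
1/(aᵐbⁿ) = Σ_{i=1}^m C(m+n-i-1, n-1)/(aⁱ(a+b)^{m+n-i}) + Σ_{j=1}^n C(m+n-j-1, m-1)/(bʲ(a+b)^{m+n-j}). -/
theorem partial_fraction_general (a b : ℂ) (ha : a ≠ 0) (hb : b ≠ 0) (hab : a + b ≠ 0)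
    (m n : ℕ) (hm : 0 < m) (hn : 0 < n) :
    1 / (a ^ m * b ^ n) =
      (∑ i ∈ Finset.Icc 1 m,
        (Nat.choose (m + n - i - 1) (n - 1) : ℂ) / (a ^ i * (a + b) ^ (m + n - i))) +
      (∑ j ∈ Finset.Icc 1 n,
        (Nat.choose (m + n - j - 1) (m - 1) : ℂ) / (b ^ j * (a + b) ^ (m + n - j))) := by
  obtain ⟨m, rfl⟩ : ∃ k, m = k + 1 := ⟨m - 1, by omega⟩
  obtain ⟨n, rfl⟩ : ∃ k, n = k + 1 := ⟨n - 1, by omega⟩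
  have hexp : ∀ i, m + 1 + (n + 1) - i = m + n + 2 - i := by omega
  have hchoose : ∀ i, m + n + 2 - i - 1 = m + n + 1 - i := by omega
  have hsum_b := sum_Icc_choose_div_pow_eq_invOneSubPowTrunc_div hb hab n m
  rw [add_comm n m] at hsum_b
  simp only [hexp, hchoose, Nat.add_sub_cancel,
    sum_Icc_choose_div_pow_eq_invOneSubPowTrunc_div ha hab, hsum_b]
  have hprob := invOneSubPowTrunc_mul_pow_add_mul_pow_eq_one
    (x := a / (a + b)) (y := b / (a + b)) (by field_simp) m n
  rw [div_pow, div_pow] at hprob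
  field_simp at hprob ⊢
  linear_combination -hprob
end

section
/- If α, β ∈ ℂ satisfy Re(α) > 0 and Re(α+β) > 0, then the integral of exp(-α t₁ - β t₃) dt₁ dt₂ dt₃ dt₄ over the simplex t₁ > t₂ > t₃ > t₄ > 0 equals 1/(α²(α+β)²). -/
/-!
In the gap coordinates `s = (t₁ - t₂, t₂ - t₃, t₃ - t₄, t₄)` the simplex becomes the
positive orthant, and the substitution is a composition of shears, hence volume preserving.
Since `t₁ = s₁ + s₂ + s₃ + s₄` and `t₃ = s₃ + s₄`, the integrand becomes
`e^{-α s₁} e^{-α s₂} e^{-(α+β) s₃} e^{-(α+β) s₄}`, so by Fubini the integral is a product of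
four integrals `∫₀^∞ e^{-c s} ds = 1/c`.
-/

open MeasureTheory Set

lemma measurePreserving_shear {G γ : Type*} [MeasureSpace G] [Add G] [MeasurableAdd₂ G]
    [(volume : Measure G).IsAddRightInvariant] [SFinite (volume : Measure G)] [MeasureSpace γ]
    [SFinite (volume : Measure γ)] {h : γ → G} (hh : Measurable h) :
    MeasurePreserving (fun p : G × γ => (p.1 + h p.2, p.2)) volume volume := by
  have skew : MeasurePreserving (fun q : γ × G => (q.1, q.2 + h q.1))
      ((volume : Measure γ).prod volume) ((volume : Measure γ).prod volume) :=
    (MeasurePreserving.id _).skew_product (measurable_snd.add (hh.comp measurable_fst))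
      (.of_forall fun x => map_add_right_eq_self volume (h x))
  rw [Measure.volume_eq_prod]
  exact (Measure.measurePreserving_swap.comp skew).comp Measure.measurePreserving_swap

theorem MeasureTheory.MeasurePreserving.setIntegral_preimage {X Y E : Type*} [MeasurableSpace X]
    [MeasurableSpace Y] [NormedAddCommGroup E] [NormedSpace ℝ E] {μ : Measure X} {ν : Measure Y}
    {f : X → Y} (hf : MeasurePreserving f μ ν) {g : Y → E} (hg : AEStronglyMeasurable g ν)
    {s : Set Y} (hs : MeasurableSet s) :
    ∫ y in s, g y ∂ν = ∫ x in f ⁻¹' s, g (f x) ∂μ := by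
  rw [← hf.map_eq] at hg ⊢
  exact setIntegral_map hs hg hf.measurable.aemeasurable

lemma integral_Ioi_cexp_neg_mul {c : ℂ} (hc : 0 < c.re) :
    ∫ t : ℝ in Ioi 0, Complex.exp (-c * t) = 1 / c := by
  rw [integral_exp_mul_complex_Ioi (by simpa using hc)]
  simp

lemma setIntegral_prod_mul₄ {α β γ δ L : Type*} [RCLike L] [MeasureSpace α] [MeasureSpace β]
    [MeasureSpace γ] [MeasureSpace δ] [SFinite (volume : Measure α)]
    [SFinite (volume : Measure β)] [SFinite (volume : Measure γ)] [SFinite (volume : Measure δ)]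
    (f : α → L) (g : β → L) (h : γ → L) (k : δ → L)
    (s : Set α) (t : Set β) (u : Set γ) (v : Set δ) :
    ∫ x in s ×ˢ t ×ˢ u ×ˢ v, f x.1 * (g x.2.1 * (h x.2.2.1 * k x.2.2.2)) =
      (∫ a in s, f a) * ((∫ b in t, g b) * ((∫ c in u, h c) * ∫ d in v, k d)) := by
  rw [Measure.volume_eq_prod,
    setIntegral_prod_mul f (fun y : β × γ × δ => g y.1 * (h y.2.1 * k y.2.2)),
    Measure.volume_eq_prod, setIntegral_prod_mul g (fun y : γ × δ => h y.1 * k y.2),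
    Measure.volume_eq_prod, setIntegral_prod_mul h k]

def tailSums (s : ℝ × ℝ × ℝ × ℝ) : ℝ × ℝ × ℝ × ℝ :=
  (s.1 + (s.2.1 + (s.2.2.1 + s.2.2.2)), s.2.1 + (s.2.2.1 + s.2.2.2), s.2.2.1 + s.2.2.2,
    s.2.2.2)

lemma measurePreserving_tailSums : MeasurePreserving tailSums volume volume := by
  have last : MeasurePreserving
      (fun p : ℝ × ℝ × ℝ × ℝ => (p.1, p.2.1, p.2.2.1 + p.2.2.2, p.2.2.2)) volume volume := by
    rw [Measure.volume_eq_prod, Measure.volume_eq_prod]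
    exact (MeasurePreserving.id _).prod
      ((MeasurePreserving.id _).prod (measurePreserving_shear measurable_id))
  have middle : MeasurePreserving (fun p : ℝ × ℝ × ℝ × ℝ => (p.1, p.2.1 + p.2.2.1, p.2.2))
      volume volume := by
    rw [Measure.volume_eq_prod]
    exact (MeasurePreserving.id _).prod (measurePreserving_shear measurable_fst)
  exact ((measurePreserving_shear measurable_fst).comp middle).comp last

lemma tailSums_preimage_simplex :
    tailSums ⁻¹' {p | 0 < p.2.2.2 ∧ p.2.2.2 < p.2.2.1 ∧ p.2.2.1 < p.2.1 ∧ p.2.1 < p.1} =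
      Ioi 0 ×ˢ Ioi 0 ×ˢ Ioi 0 ×ˢ Ioi 0 := by
  ext ⟨s₁, s₂, s₃, s₄⟩
  simp only [tailSums, mem_preimage, mem_ofPred_eq, mem_prod, mem_Ioi]
  constructor <;> rintro ⟨h₁, h₂, h₃, h₄⟩ <;> refine ⟨?_, ?_, ?_, ?_⟩ <;> linarith

/-- Integral representation of the refined MDZV term ζ^{(1)}(2,2):
∫_{t₁>t₂>t₃>t₄>0} exp(-αt₁ - βt₃) = 1/(α²(α+β)²). -/
theorem integral_simplex_zeta22 (α β : ℂ) (hα : 0 < α.re) (hαβ : 0 < (α + β).re) :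
    ∫ p : ℝ × ℝ × ℝ × ℝ in
        {p : ℝ × ℝ × ℝ × ℝ |
          0 < p.2.2.2 ∧ p.2.2.2 < p.2.2.1 ∧ p.2.2.1 < p.2.1 ∧ p.2.1 < p.1},
        Complex.exp (-α * p.1 - β * p.2.2.1) = 1 / (α ^ 2 * (α + β) ^ 2) := by
  have factor (s : ℝ × ℝ × ℝ × ℝ) :
      Complex.exp (-α * (tailSums s).1 - β * (tailSums s).2.2.1) =
        Complex.exp (-α * s.1) * (Complex.exp (-α * s.2.1) *
          (Complex.exp (-(α + β) * s.2.2.1) * Complex.exp (-(α + β) * s.2.2.2))) := by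
    simp only [tailSums, ← Complex.exp_add]
    push_cast
    ring_nf
  rw [measurePreserving_tailSums.setIntegral_preimage (by fun_prop) (by measurability),
    tailSums_preimage_simplex]
  simp only [factor]
  rw [setIntegral_prod_mul₄ (fun t : ℝ => Complex.exp (-α * t))
    (fun t : ℝ => Complex.exp (-α * t)) (fun t : ℝ => Complex.exp (-(α + β) * t))
    (fun t : ℝ => Complex.exp (-(α + β) * t)),
    integral_Ioi_cexp_neg_mul hα, integral_Ioi_cexp_neg_mul hαβ]
  simp only [one_div, mul_inv, ← inv_pow]
  ring
end

section
/- If α, β ∈ ℂ satisfy Re(α) > 0 and Re(α+β) > 0, then the integral of exp(-α t₁ - β t₂) dt₁ dt₂ dt₃ dt₄ over the simplex t₁ > t₂ > t₃ > t₄ > 0 equals 1/(α(α+β)³). -/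
/-!
The substitution `(t₁, t₂, t₃, t₄) = (u₁ + u₂ + u₃ + u₄, u₂ + u₃ + u₄, u₃ + u₄, u₄)` is a composition
of shears, hence preserves Lebesgue measure, and it maps the positive orthant onto the simplex.
In the new variables the exponent is `-α u₁ - (α + β) (u₂ + u₃ + u₄)`, so the integral factors into
four Laplace integrals `∫₀^∞ e^{-c u} du = 1 / c`, giving `α⁻¹ (α + β)⁻³`.
-/

open MeasureTheory Set

lemma integral_cexp_neg_mul_Ioi_zero {c : ℂ} (hc : 0 < c.re) :
    ∫ t : ℝ in Ioi 0, Complex.exp (-c * t) = c⁻¹ := by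
  simpa [div_neg, neg_div, one_div] using
    integral_exp_mul_complex_Ioi (a := -c) (by simpa using hc) 0

lemma setIntegral_Ioi_prod_cexp_neg_mul {β : Type*} [MeasurableSpace β] {ν : Measure β}
    [SFinite ν] {a : ℂ} (ha : 0 < a.re) (g : β → ℂ) (t : Set β) :
    ∫ z : ℝ × β in Ioi 0 ×ˢ t, Complex.exp (-a * z.1) * g z.2 ∂(volume.prod ν) =
      a⁻¹ * ∫ y in t, g y ∂ν := by
  rw [setIntegral_prod_mul (fun x : ℝ => Complex.exp (-a * x)), integral_cexp_neg_mul_Ioi_zero ha]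

lemma integral_orthant_cexp_neg {a b c d : ℂ} (ha : 0 < a.re) (hb : 0 < b.re) (hc : 0 < c.re)
    (hd : 0 < d.re) :
    ∫ p : ℝ × ℝ × ℝ × ℝ in Ioi 0 ×ˢ Ioi 0 ×ˢ Ioi 0 ×ˢ Ioi 0,
      Complex.exp (-a * p.1) * (Complex.exp (-b * p.2.1) *
        (Complex.exp (-c * p.2.2.1) * Complex.exp (-d * p.2.2.2))) = (a * b * c * d)⁻¹ := by
  simp only [Measure.volume_eq_prod]
  rw [setIntegral_Ioi_prod_cexp_neg_mul ha (fun q : ℝ × ℝ × ℝ =>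
      Complex.exp (-b * q.1) * (Complex.exp (-c * q.2.1) * Complex.exp (-d * q.2.2))),
    setIntegral_Ioi_prod_cexp_neg_mul hb (fun q : ℝ × ℝ =>
      Complex.exp (-c * q.1) * Complex.exp (-d * q.2)),
    setIntegral_Ioi_prod_cexp_neg_mul hc (fun q : ℝ => Complex.exp (-d * q)),
    integral_cexp_neg_mul_Ioi_zero hd]
  simp only [mul_inv, mul_assoc]

lemma MeasureTheory.MeasurePreserving.shear {G α : Type*} [MeasurableSpace G] [AddGroup G]
    [MeasurableAdd₂ G] {ν : Measure G} [ν.IsAddRightInvariant] [SFinite ν]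
    [MeasurableSpace α] {μ : Measure α} [SFinite μ] {f : α → α} (hf : MeasurePreserving f μ μ)
    {s : α → G} (hs : Measurable s) :
    MeasurePreserving (fun p : G × α => (p.1 + s p.2, f p.2)) (ν.prod μ) (ν.prod μ) := by
  have hskew : MeasurePreserving (fun q : α × G => (f q.1, q.2 + s q.1)) (μ.prod ν) (μ.prod ν) :=
    hf.skew_product (measurable_snd.add (hs.comp measurable_fst))
      (.of_forall fun a => map_add_right_eq_self ν (s a))
  exact Measure.measurePreserving_swap.comp (hskew.comp Measure.measurePreserving_swap)

def suffixSums : ℝ × ℝ × ℝ × ℝ ≃ₜ ℝ × ℝ × ℝ × ℝ where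
  toFun p := (p.1 + (p.2.1 + (p.2.2.1 + p.2.2.2)), p.2.1 + (p.2.2.1 + p.2.2.2),
    p.2.2.1 + p.2.2.2, p.2.2.2)
  invFun t := (t.1 - t.2.1, t.2.1 - t.2.2.1, t.2.2.1 - t.2.2.2, t.2.2.2)
  left_inv p := by ext <;> simp
  right_inv t := by ext <;> simp
  continuous_toFun := by fun_prop
  continuous_invFun := by fun_prop

lemma suffixSums_apply (a b c d : ℝ) :
    suffixSums (a, b, c, d) = (a + (b + (c + d)), b + (c + d), c + d, d) :=
  rfl

lemma measurePreserving_suffixSums : MeasurePreserving suffixSums := by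
  have h₂ : MeasurePreserving (fun p : ℝ × ℝ => (p.1 + p.2, p.2)) :=
    (MeasurePreserving.id (volume : Measure ℝ)).shear (ν := volume) measurable_id
  have h₃ : MeasurePreserving
      (fun p : ℝ × ℝ × ℝ => (p.1 + (p.2.1 + p.2.2), p.2.1 + p.2.2, p.2.2)) :=
    h₂.shear (ν := volume) (s := fun q : ℝ × ℝ => q.1 + q.2) (by fun_prop)
  exact h₃.shear (ν := volume) (s := fun q : ℝ × ℝ × ℝ => q.1 + (q.2.1 + q.2.2)) (by fun_prop)

lemma suffixSums_preimage_simplex :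
    suffixSums ⁻¹' {p : ℝ × ℝ × ℝ × ℝ |
      0 < p.2.2.2 ∧ p.2.2.2 < p.2.2.1 ∧ p.2.2.1 < p.2.1 ∧ p.2.1 < p.1} =
      Ioi 0 ×ˢ Ioi 0 ×ˢ Ioi 0 ×ˢ Ioi 0 := by
  ext ⟨a, b, c, d⟩
  simp only [suffixSums_apply, mem_preimage, mem_ofPred_eq, mem_prod, mem_Ioi]
  constructor <;> rintro ⟨h₁, h₂, h₃, h₄⟩ <;> refine ⟨?_, ?_, ?_, ?_⟩ <;> linarith

/-- Integral representation of the refined MDZV term ζ^{(1)}(1,3):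
∫_{t₁>t₂>t₃>t₄>0} exp(-αt₁ - βt₂) = 1/(α(α+β)³). -/
theorem integral_simplex_zeta13 (α β : ℂ) (hα : 0 < α.re) (hαβ : 0 < (α + β).re) :
    ∫ p : ℝ × ℝ × ℝ × ℝ in
        {p : ℝ × ℝ × ℝ × ℝ |
          0 < p.2.2.2 ∧ p.2.2.2 < p.2.2.1 ∧ p.2.2.1 < p.2.1 ∧ p.2.1 < p.1},
        Complex.exp (-α * p.1 - β * p.2.1) = 1 / (α * (α + β) ^ 3) := by
  rw [← measurePreserving_suffixSums.setIntegral_preimage_emb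
    suffixSums.measurableEmbedding, suffixSums_preimage_simplex]
  have hfactor (p : ℝ × ℝ × ℝ × ℝ) :
      Complex.exp (-α * (suffixSums p).1 - β * (suffixSums p).2.1) =
        Complex.exp (-α * p.1) * (Complex.exp (-(α + β) * p.2.1) *
          (Complex.exp (-(α + β) * p.2.2.1) * Complex.exp (-(α + β) * p.2.2.2))) := by
    obtain ⟨a, b, c, d⟩ := p
    simp only [suffixSums_apply, ← Complex.exp_add]
    congr 1
    push_cast
    ring
  simp only [hfactor, integral_orthant_cexp_neg hα hαβ hαβ hαβ]
  ring
end
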